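/- arXiv:2212.13290 — 4 statements merged into one kernel-verified Lean document; each statement's English description precedes it below -/
import Mathlib

section
/- For any finite set S of real numbers with pairwise distinct elements and any real η ≠ 0 such that all the quantities x - y, x - y + η, x - y - η, x - y + 2η, x - y - 2η are nonzero for distinct x, y ∈ S, define U⁺(x,y) = ((x-y+2η)(x-y-η))/((x-y+η)(x-y)) and U⁻(x,y) = ((x-y-2η)(x-y+η))/((x-y-η)(x-y)). Then ∑_{i∈S} ∏_{ℓ∈S, ℓ≠i} U⁺(i,ℓ) = ∑_{i∈S} ∏_{ℓ∈S, ℓ≠i} U⁻(i,ℓ). -/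
open Polynomial Finset

private lemma basisDivisor_leadingCoeff (x y : ℝ) :
    (Lagrange.basisDivisor x y).leadingCoeff = (x - y)⁻¹ := by
  unfold Lagrange.basisDivisor
  rw [leadingCoeff_mul, leadingCoeff_C, leadingCoeff_X_sub_C, mul_one]

/-- Lagrange-type vanishing: if `R` has degree `< #W - 1`, the weighted sum of its
values over nodes `W` with Lagrange leading weights vanishes. -/
private lemma lagrange_sum_zero (W : Finset ℝ) (R : Polynomial ℝ)
    (hR : R.degree < ((W.card - 1 : ℕ) : WithBot ℕ)) :
    ∑ w ∈ W, R.eval w * (∏ z ∈ W.erase w, (w - z))⁻¹ = 0 := by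
  classical
  have hinj : Set.InjOn (id : ℝ → ℝ) W := Function.injective_id.injOn
  have hdeg : R.degree < (W.card : WithBot ℕ) := by
    refine lt_of_lt_of_le hR ?_
    rw [Nat.cast_withBot, Nat.cast_withBot]
    exact WithBot.coe_le_coe.mpr (Nat.sub_le _ _)
  have hI := Lagrange.eq_interpolate (v := id) hinj hdeg
  have h0 : R.coeff (W.card - 1) = 0 := coeff_eq_zero_of_degree_lt hR
  have hb : ∀ w ∈ W, (Lagrange.basis W id w).coeff (W.card - 1)
      = (∏ z ∈ W.erase w, (w - z))⁻¹ := by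
    intro w hw
    have hnd := Lagrange.natDegree_basis hinj hw
    have h1 : (Lagrange.basis W id w).coeff (W.card - 1)
        = (Lagrange.basis W id w).leadingCoeff := by
      rw [Polynomial.leadingCoeff, hnd]
    rw [h1]
    unfold Lagrange.basis
    rw [leadingCoeff_prod, ← Finset.prod_inv_distrib]
    exact Finset.prod_congr rfl fun z _ => basisDivisor_leadingCoeff w z
  have hc := congrArg (fun p => p.coeff (W.card - 1)) hI
  simp only [Lagrange.interpolate_apply, finset_sum_coeff, coeff_C_mul, id_eq] at hc
  rw [h0] at hc
  calc ∑ w ∈ W, R.eval w * (∏ z ∈ W.erase w, (w - z))⁻¹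
      = ∑ w ∈ W, R.eval w * (Lagrange.basis W id w).coeff (W.card - 1) :=
        Finset.sum_congr rfl fun w hw => by rw [hb w hw]
    _ = 0 := hc.symm

private lemma alg_cancel1 (η A E F : ℝ) (hη : η ≠ 0) :
    (2*η*(-η)) * A * (E * (η * F))⁻¹ = -(2*η) * (A * (F * E)⁻¹) := by
  rw [mul_inv, mul_inv, mul_inv]
  have h := mul_inv_cancel₀ hη
  linear_combination (-(2*A*E⁻¹*F⁻¹*η)) * h

private lemma alg_cancel2 (η A E F : ℝ) (hη : η ≠ 0) :
    (η*(-(2*η))) * A * ((-η) * E * F)⁻¹ = (2*η) * (A * (E * F)⁻¹) := by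
  rw [mul_inv, mul_inv]
  have h := mul_inv_cancel₀ (neg_ne_zero.mpr hη)
  linear_combination (2*η*A*E⁻¹*F⁻¹) * h

/-- Rational degeneration of the m=1 case of the key identity (Lemma 4.1)
for the deformed Ruijsenaars-Schneider system. -/
theorem deformedRS_key_identity_m1 (S : Finset ℝ) (η : ℝ) (hη : η ≠ 0)
    (hdist : ∀ x ∈ S, ∀ y ∈ S, x ≠ y →
      x - y ≠ 0 ∧ x - y + η ≠ 0 ∧ x - y - η ≠ 0 ∧ x - y + 2*η ≠ 0 ∧ x - y - 2*η ≠ 0) :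
    ∑ i ∈ S, ∏ ℓ ∈ S.erase i,
        ((i - ℓ + 2*η) * (i - ℓ - η)) / ((i - ℓ + η) * (i - ℓ))
      = ∑ i ∈ S, ∏ ℓ ∈ S.erase i,
        ((i - ℓ - 2*η) * (i - ℓ + η)) / ((i - ℓ - η) * (i - ℓ)) := by
  classical
  rcases S.eq_empty_or_nonempty with rfl | hS
  · simp
  have hn1 : 1 ≤ S.card := Finset.card_pos.mpr hS
  set f : ℝ → ℝ := fun y => y - η with hf
  have hfinj : Function.Injective f := fun a b h => by
    simpa [hf] using h
  set T := S.image f with hT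
  have hxT : ∀ x ∈ S, x ∉ T := by
    intro x hx hxTmem
    rcases Finset.mem_image.mp hxTmem with ⟨y, hy, hyx⟩
    simp only [hf] at hyx
    by_cases hxy : x = y
    · subst hxy; exact hη (by linarith)
    · exact (hdist x hx y hy hxy).2.1 (by linarith)
  have hdisj : Disjoint S T := Finset.disjoint_left.mpr hxT
  set W := S ∪ T with hW
  have hcard : W.card = 2 * S.card := by
    rw [hW, Finset.card_union_of_disjoint hdisj, hT,
      Finset.card_image_of_injective _ hfinj]
    ring
  -- the polynomial Q
  set Q : Polynomial ℝ := ∏ ℓ ∈ S, ((X - C (ℓ - 2*η)) * (X - C (ℓ + η))) with hQ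
  have hmono : ∀ ℓ ∈ S, ((X - C (ℓ - 2*η)) * (X - C (ℓ + η))).Monic :=
    fun ℓ _ => (monic_X_sub_C _).mul (monic_X_sub_C _)
  have hQm : Q.Monic := monic_prod_of_monic _ _ hmono
  have hQdeg : Q.natDegree = 2 * S.card := by
    rw [hQ, natDegree_prod_of_monic _ _ hmono]
    have : ∀ ℓ ∈ S, ((X - C (ℓ - 2*η)) * (X - C (ℓ + η))).natDegree = 2 := by
      intro ℓ _
      rw [((monic_X_sub_C _).natDegree_mul (monic_X_sub_C _)),
        natDegree_X_sub_C, natDegree_X_sub_C]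
    rw [Finset.sum_congr rfl this, Finset.sum_const, smul_eq_mul]
    ring
  have hQnext : Q.nextCoeff = -(2 * ∑ x ∈ S, x) + S.card * η := by
    rw [hQ, Monic.nextCoeff_prod _ _ hmono]
    have : ∀ ℓ ∈ S, ((X - C (ℓ - 2*η)) * (X - C (ℓ + η))).nextCoeff = -(2*ℓ) + η := by
      intro ℓ _
      rw [Monic.nextCoeff_mul (monic_X_sub_C _) (monic_X_sub_C _),
        nextCoeff_X_sub_C, nextCoeff_X_sub_C]
      ring
    have h2 : ∀ ℓ ∈ S, -(2*ℓ) + η = (-2)*ℓ + η := fun ℓ _ => by ring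
    rw [Finset.sum_congr rfl this, Finset.sum_congr rfl h2, Finset.sum_add_distrib,
      ← Finset.mul_sum, Finset.sum_const, nsmul_eq_mul]
    ring
  -- the nodal polynomial
  set P : Polynomial ℝ := Lagrange.nodal W id with hP
  have hPm : P.Monic := Lagrange.nodal_monic
  have hPdeg : P.natDegree = 2 * S.card := by
    rw [hP, Lagrange.natDegree_nodal, hcard]
  have hsumW : ∑ w ∈ W, w = 2 * (∑ x ∈ S, x) - S.card * η := by
    rw [hW, Finset.sum_union hdisj, hT,
      Finset.sum_image (fun a _ b _ h => hfinj h)]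
    simp only [hf]
    rw [Finset.sum_sub_distrib, Finset.sum_const, nsmul_eq_mul]
    ring
  have hPnext : P.nextCoeff = -(2 * ∑ x ∈ S, x) + S.card * η := by
    have : P = ∏ w ∈ W, (X - C (id w)) := by rw [hP, Lagrange.nodal]
    rw [this, prod_X_sub_C_nextCoeff]
    simp only [id_eq]
    rw [hsumW]; ring
  -- R = Q - P has small degree
  set R := Q - P with hR
  have hRdeg : R.degree < ((2 * S.card - 1 : ℕ) : WithBot ℕ) := by
    rw [degree_lt_iff_coeff_zero]
    intro m hm
    rw [hR, coeff_sub]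
    rcases lt_trichotomy m (2 * S.card) with hlt | heq | hgt
    · have hm1 : m = 2 * S.card - 1 := by omega
      subst hm1
      have e1 : Q.coeff (2 * S.card - 1) = Q.nextCoeff := by
        rw [nextCoeff_of_natDegree_pos (by rw [hQdeg]; omega), hQdeg]
      have e2 : P.coeff (2 * S.card - 1) = P.nextCoeff := by
        rw [nextCoeff_of_natDegree_pos (by rw [hPdeg]; omega), hPdeg]
      rw [e1, e2, hQnext, hPnext, sub_self]
    · subst heq
      rw [← hQdeg, hQm.coeff_natDegree, hQdeg, ← hPdeg, hPm.coeff_natDegree, sub_self]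
    · rw [coeff_eq_zero_of_natDegree_lt (by rw [hQdeg]; omega),
        coeff_eq_zero_of_natDegree_lt (by rw [hPdeg]; omega), sub_self]
  have hzero := lagrange_sum_zero W R (by rw [hcard]; exact hRdeg)
  have hReval : ∀ w ∈ W, R.eval w = Q.eval w := by
    intro w hw
    rw [hR, eval_sub, hP]
    have := Lagrange.eval_nodal_at_node (s := W) (v := id) hw
    simp only [id_eq] at this
    rw [this, sub_zero]
  rw [Finset.sum_congr rfl (fun w hw => by rw [hReval w hw])] at hzero
  rw [hW, Finset.sum_union hdisj, hT,
    Finset.sum_image (fun a _ b _ h => hfinj h)] at hzero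
  -- term for x ∈ S
  have hterm1 : ∀ x ∈ S, Q.eval x * (∏ z ∈ (S ∪ T).erase x, (x - z))⁻¹
      = -(2*η) * ∏ ℓ ∈ S.erase x,
          ((x - ℓ + 2*η) * (x - ℓ - η)) / ((x - ℓ + η) * (x - ℓ)) := by
    intro x hx
    have hQe : Q.eval x
        = (2*η*(-η)) * ∏ ℓ ∈ S.erase x, ((x - ℓ + 2*η) * (x - ℓ - η)) := by
      rw [hQ, eval_prod, ← Finset.mul_prod_erase _ _ hx]
      congr 1
      · simp only [eval_mul, eval_sub, eval_X, eval_C]; ring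
      · exact Finset.prod_congr rfl fun ℓ _ => by
          simp only [eval_mul, eval_sub, eval_X, eval_C]; ring
    have herase : (S ∪ T).erase x = (S.erase x) ∪ T := by
      rw [Finset.erase_union_distrib, Finset.erase_eq_of_notMem (hxT x hx)]
    have hprodT : ∏ z ∈ T, (x - z) = η * ∏ ℓ ∈ S.erase x, (x - ℓ + η) := by
      rw [hT, Finset.prod_image (fun a _ b _ h => hfinj h),
        ← Finset.mul_prod_erase _ _ hx]
      congr 1
      · simp only [hf]; ring
      · exact Finset.prod_congr rfl fun ℓ _ => by simp only [hf]; ring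
    have hd2 : Disjoint (S.erase x) T := hdisj.mono_left (Finset.erase_subset _ _)
    rw [herase, Finset.prod_union hd2, hQe, hprodT,
      Finset.prod_div_distrib, Finset.prod_mul_distrib, div_eq_mul_inv,
      show (∏ ℓ ∈ S.erase x, ((x - ℓ + η) * (x - ℓ)))
        = (∏ ℓ ∈ S.erase x, (x - ℓ + η)) * ∏ ℓ ∈ S.erase x, (x - ℓ)
        from Finset.prod_mul_distrib]
    exact alg_cancel1 η _ _ _ hη
  -- term for y - η, y ∈ S
  have hterm2 : ∀ y ∈ S, Q.eval (f y) * (∏ z ∈ (S ∪ T).erase (f y), (f y - z))⁻¹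
      = (2*η) * ∏ ℓ ∈ S.erase y,
          ((y - ℓ - 2*η) * (y - ℓ + η)) / ((y - ℓ - η) * (y - ℓ)) := by
    intro y hy
    have hyS : f y ∉ S := by
      intro hmem
      exact hxT (f y) hmem (Finset.mem_image_of_mem f hy)
    have hQe : Q.eval (f y)
        = (η*(-(2*η))) * ∏ ℓ ∈ S.erase y, ((y - ℓ + η) * (y - ℓ - 2*η)) := by
      rw [hQ, eval_prod, ← Finset.mul_prod_erase _ _ hy]
      congr 1
      · simp only [hf, eval_mul, eval_sub, eval_X, eval_C]; ring
      · exact Finset.prod_congr rfl fun ℓ _ => by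
          simp only [hf, eval_mul, eval_sub, eval_X, eval_C]; ring
    have herase : (S ∪ T).erase (f y) = S ∪ ((S.erase y).image f) := by
      rw [Finset.erase_union_distrib, Finset.erase_eq_of_notMem hyS, hT,
        Finset.image_erase hfinj]
    have hprodS : ∏ z ∈ S, (f y - z) = (-η) * ∏ ℓ ∈ S.erase y, (y - ℓ - η) := by
      rw [← Finset.mul_prod_erase _ _ hy]
      congr 1
      · simp only [hf]; ring
      · exact Finset.prod_congr rfl fun ℓ _ => by simp only [hf]; ring
    have hprodT : ∏ z ∈ (S.erase y).image f, (f y - z) = ∏ ℓ ∈ S.erase y, (y - ℓ) := by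
      rw [Finset.prod_image (fun a _ b _ h => hfinj h)]
      exact Finset.prod_congr rfl fun ℓ _ => by simp only [hf]; ring
    have hd2 : Disjoint S ((S.erase y).image f) := by
      refine hdisj.mono_right ?_
      rw [hT]
      exact Finset.image_subset_image (Finset.erase_subset _ _)
    rw [herase, Finset.prod_union hd2, hQe, hprodS, hprodT]
    have hre : ∏ ℓ ∈ S.erase y, ((y - ℓ - 2*η) * (y - ℓ + η)) / ((y - ℓ - η) * (y - ℓ))
        = (∏ ℓ ∈ S.erase y, ((y - ℓ + η) * (y - ℓ - 2*η)))
          * ((∏ ℓ ∈ S.erase y, (y - ℓ - η)) * ∏ ℓ ∈ S.erase y, (y - ℓ))⁻¹ := by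
      rw [Finset.prod_div_distrib, div_eq_mul_inv]
      congr 1
      · exact Finset.prod_congr rfl fun ℓ _ => mul_comm _ _
      · rw [Finset.prod_mul_distrib]
    rw [hre]
    exact alg_cancel2 η _ _ _ hη
  rw [Finset.sum_congr rfl hterm1, Finset.sum_congr rfl hterm2,
    ← Finset.mul_sum, ← Finset.mul_sum] at hzero
  have h2η : (2*η) ≠ 0 := mul_ne_zero two_ne_zero hη
  have key : (2*η) * (∑ i ∈ S, ∏ ℓ ∈ S.erase i,
        ((i - ℓ + 2*η) * (i - ℓ - η)) / ((i - ℓ + η) * (i - ℓ)))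
      = (2*η) * (∑ i ∈ S, ∏ ℓ ∈ S.erase i,
        ((i - ℓ - 2*η) * (i - ℓ + η)) / ((i - ℓ - η) * (i - ℓ))) := by
    linarith [hzero]
  exact mul_left_cancel₀ h2η key
end

section
/- Let S be a finite set of real numbers and η ≠ 0 a real number such that for all distinct x,y ∈ S the numbers x-y, x-y±η, x-y±2η are all nonzero. Define U⁺(x,y) = ((x-y+2η)(x-y-η))/((x-y+η)(x-y)) and U⁻(x,y) = ((x-y-2η)(x-y+η))/((x-y-η)(x-y)). Then for every subset size m, ∑_{I⊆S, |I|=m} ∏_{i∈I} ∏_{ℓ∈S∖I} U⁺(i,ℓ) = ∑_{I⊆S, |I|=m} ∏_{i∈I} ∏_{ℓ∈S∖I} U⁻(i,ℓ). -/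
/-!
Write `J(V, m)` for the sum of the `U⁺`-products over the `m`-subsets of `V`. Replacing every
subset by its complement turns the `U⁻`-sum into `J(V, |V| - m)`, so it suffices to show
`J(V, m) = J(V, |V| - m)`, by strong induction on `V`.

Split off a point `a` of `V = T ∪ {a}` and treat it as a variable `t`. Once the poles at
`t = ℓ, ℓ ± η` (`ℓ ∈ T`) are cleared, `J(T ∪ {t}, k + 1)` becomes a polynomial in `t` of degree at
most `3|T|` with top coefficient `J(T, k) + J(T, k + 1)`. It vanishes at every `p ∈ T` (the terms
of `I` and `I ∪ {p}` cancel in pairs), and its values at `p ∓ η` are `J(T \ {p}, k)` times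
factors independent of `k`. By the induction hypothesis these data agree for `k = m - 1` and
`k = |V| - m - 1`, and `3|T|` values together with the top coefficient determine the polynomial.
-/

open Finset Polynomial

namespace Finset

variable {α β : Type*} [DecidableEq α] {s : Finset α} {a : α}

lemma sum_powersetCard_succ_insert [AddCommMonoid β] (ha : a ∉ s) (n : ℕ) (f : Finset α → β) :
    ∑ t ∈ (insert a s).powersetCard (n + 1), f t =
      ∑ t ∈ s.powersetCard (n + 1), f t + ∑ t ∈ s.powersetCard n, f (insert a t) := by
  rw [powersetCard_succ_insert ha, sum_union, sum_image]
  · exact insert_erase_invOn.2.injOn.mono fun t ht ↦ notMem_mono (mem_powersetCard.1 ht).1 ha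
  · aesop (add simp [disjoint_left, insert_subset_iff, mem_powersetCard])

lemma sum_powersetCard_insert_of_eq_zero_of_mem [AddCommMonoid β] (n : ℕ)
    {f : Finset α → β} (hf : ∀ t, a ∈ t → f t = 0) :
    ∑ t ∈ (insert a s).powersetCard n, f t = ∑ t ∈ s.powersetCard n, f t := by
  refine (sum_subset (powersetCard_mono (subset_insert a s)) fun t ht hts ↦ hf t ?_).symm
  by_contra hat
  rw [mem_powersetCard, subset_insert_iff_of_notMem hat] at ht
  exact hts (mem_powersetCard.2 ht)

lemma sum_powersetCard_succ_insert_of_eq_zero_of_notMem [AddCommMonoid β] (ha : a ∉ s) (n : ℕ)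
    {f : Finset α → β} (hf : ∀ t, a ∉ t → f t = 0) :
    ∑ t ∈ (insert a s).powersetCard (n + 1), f t = ∑ t ∈ s.powersetCard n, f (insert a t) := by
  rw [sum_powersetCard_succ_insert ha, sum_eq_zero fun t ht ↦ hf t ?_, zero_add]
  exact notMem_mono (mem_powersetCard.1 ht).1 ha

lemma sum_powersetCard_prod_prod_sdiff_swap [CommSemiring β] {m : ℕ} (hm : m ≤ #s)
    (f : α → α → β) :
    ∑ t ∈ s.powersetCard m, ∏ i ∈ t, ∏ j ∈ s \ t, f j i =
      ∑ t ∈ s.powersetCard (#s - m), ∏ i ∈ t, ∏ j ∈ s \ t, f i j := by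
  refine sum_nbij' (s \ ·) (s \ ·) (fun t ht ↦ ?_) (fun t ht ↦ ?_) (fun t ht ↦ ?_)
    (fun t ht ↦ ?_) (fun t ht ↦ ?_) <;> simp only [mem_powersetCard] at ht ⊢
  · exact ⟨sdiff_subset, by rw [card_sdiff_of_subset ht.1, ht.2]⟩
  · exact ⟨sdiff_subset, by rw [card_sdiff_of_subset ht.1, ht.2]; omega⟩
  · exact sdiff_sdiff_eq_self ht.1
  · exact sdiff_sdiff_eq_self ht.1
  · rw [sdiff_sdiff_eq_self ht.1, prod_comm]

end Finset

namespace Polynomial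

lemma degree_sub_lt_of_coeff_eq {R : Type*} [CommRing R] {P Q : R[X]} {n : ℕ}
    (hP : P.natDegree ≤ n) (hQ : Q.natDegree ≤ n) (h : P.coeff n = Q.coeff n) :
    (P - Q).degree < n := by
  refine (degree_lt_iff_coeff_zero _ _).2 fun m hm ↦ ?_
  rw [coeff_sub, sub_eq_zero]
  rcases hm.eq_or_lt with rfl | hm
  · exact h
  · rw [coeff_eq_zero_of_natDegree_lt (hP.trans_lt hm),
      coeff_eq_zero_of_natDegree_lt (hQ.trans_lt hm)]

end Polynomial

namespace DeformedRS

section Generic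

variable {R ι : Type*} [CommRing R] [DecidableEq ι]

noncomputable def cubic (a b c : R) : R[X] := (X - C a) * (X - C b) * (X - C c)

lemma monic_cubic (a b c : R) : (cubic a b c).Monic :=
  ((monic_X_sub_C a).mul (monic_X_sub_C b)).mul (monic_X_sub_C c)

lemma natDegree_cubic [Nontrivial R] (a b c : R) : (cubic a b c).natDegree = 3 := by
  rw [cubic, ((monic_X_sub_C a).mul (monic_X_sub_C b)).natDegree_mul (monic_X_sub_C c),
    (monic_X_sub_C a).natDegree_mul (monic_X_sub_C b)]
  simp only [natDegree_X_sub_C]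

lemma eval_cubic (a b c t : R) : (cubic a b c).eval t = (t - a) * (t - b) * (t - c) := by
  simp [cubic]

noncomputable def prodSdiffMulProd (f g : ι → R[X]) (T I : Finset ι) : R[X] :=
  (∏ ℓ ∈ T \ I, f ℓ) * ∏ i ∈ I, g i

variable {f g : ι → R[X]} {T I : Finset ι} {p : ι}

lemma monic_prodSdiffMulProd (hf : ∀ i, (f i).Monic) (hg : ∀ i, (g i).Monic) :
    (prodSdiffMulProd f g T I).Monic :=
  (monic_prod_of_monic _ _ fun i _ ↦ hf i).mul (monic_prod_of_monic _ _ fun i _ ↦ hg i)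

lemma natDegree_prodSdiffMulProd {n : ℕ} (hf : ∀ i, (f i).Monic) (hg : ∀ i, (g i).Monic)
    (hfn : ∀ i, (f i).natDegree = n) (hgn : ∀ i, (g i).natDegree = n) (hI : I ⊆ T) :
    (prodSdiffMulProd f g T I).natDegree = n * #T := by
  rw [prodSdiffMulProd, (monic_prod_of_monic _ _ fun i _ ↦ hf i).natDegree_mul
      (monic_prod_of_monic _ _ fun i _ ↦ hg i), natDegree_prod_of_monic _ _ fun i _ ↦ hf i,
    natDegree_prod_of_monic _ _ fun i _ ↦ hg i]
  simp only [hfn, hgn, sum_const, smul_eq_mul]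
  rw [mul_comm, mul_comm _ n, ← mul_add, card_sdiff_add_card_eq_card hI]

lemma eval_prodSdiffMulProd_of_mem {t : R} (hp : p ∈ I) (h : (g p).eval t = 0) :
    (prodSdiffMulProd f g T I).eval t = 0 := by
  rw [prodSdiffMulProd, eval_mul, eval_prod, eval_prod, prod_eq_zero hp h, mul_zero]

lemma eval_prodSdiffMulProd_of_mem_sdiff {t : R} (hp : p ∈ T \ I) (h : (f p).eval t = 0) :
    (prodSdiffMulProd f g T I).eval t = 0 := by
  rw [prodSdiffMulProd, eval_mul, eval_prod, prod_eq_zero hp h, zero_mul]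

lemma prodSdiffMulProd_insert_of_subset (hp : p ∉ T) (hI : I ⊆ T) :
    prodSdiffMulProd f g (insert p T) I = f p * prodSdiffMulProd f g T I := by
  rw [prodSdiffMulProd, prodSdiffMulProd, insert_sdiff_of_notMem _ (notMem_mono hI hp),
    prod_insert fun h ↦ hp (mem_sdiff.1 h).1, mul_assoc]

lemma prodSdiffMulProd_insert_insert (hp : p ∉ T) (hI : I ⊆ T) :
    prodSdiffMulProd f g (insert p T) (insert p I) = g p * prodSdiffMulProd f g T I := by
  rw [prodSdiffMulProd, prodSdiffMulProd, insert_sdiff_insert, sdiff_insert_of_notMem hp,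
    prod_insert (notMem_mono hI hp), mul_left_comm]

end Generic

variable {K : Type*} [Field K] (η : K)

-- `factor η (x - y)` is `U⁺(x, y)`, and `factor η (y - x)` is `U⁻(x, y)` by `factor_sub_swap`.
def factor (d : K) : K := (d + 2 * η) * (d - η) / ((d + η) * d)

lemma factor_sub_swap (x y : K) :
    factor η (y - x) = (x - y - 2 * η) * (x - y + η) / ((x - y - η) * (x - y)) := by
  rw [factor]; congr 1 <;> ring

def IsSeparated (S : Finset K) : Prop :=
  ∀ x ∈ S, ∀ y ∈ S, x ≠ y →
    x - y ≠ 0 ∧ x - y + η ≠ 0 ∧ x - y - η ≠ 0 ∧ x - y + 2 * η ≠ 0 ∧ x - y - 2 * η ≠ 0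

-- In the variable `t`, `poleCubic η c` clears the poles of `factor η (t - c)` and of
-- `factor η (c - t)`; `plusCubic η c` and `minusCubic η c` are the resulting numerators.
noncomputable def poleCubic (c : K) : K[X] := cubic c (c - η) (c + η)
noncomputable def plusCubic (c : K) : K[X] := cubic (c - 2 * η) (c + η) (c + η)
noncomputable def minusCubic (c : K) : K[X] := cubic (c + 2 * η) (c - η) (c - η)

lemma eval_poleCubic (c t : K) :
    (poleCubic η c).eval t = (t - c) * (t - c + η) * (t - c - η) := by
  rw [poleCubic, eval_cubic]; ring

lemma eval_plusCubic (c t : K) :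
    (plusCubic η c).eval t = (t - c + 2 * η) * (t - c - η) ^ 2 := by
  rw [plusCubic, eval_cubic]; ring

lemma eval_minusCubic (c t : K) :
    (minusCubic η c).eval t = (t - c - 2 * η) * (t - c + η) ^ 2 := by
  rw [minusCubic, eval_cubic]; ring

lemma monic_poleCubic (c : K) : (poleCubic η c).Monic := monic_cubic _ _ _
lemma monic_plusCubic (c : K) : (plusCubic η c).Monic := monic_cubic _ _ _
lemma monic_minusCubic (c : K) : (minusCubic η c).Monic := monic_cubic _ _ _
lemma natDegree_poleCubic (c : K) : (poleCubic η c).natDegree = 3 := natDegree_cubic _ _ _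
lemma natDegree_plusCubic (c : K) : (plusCubic η c).natDegree = 3 := natDegree_cubic _ _ _
lemma natDegree_minusCubic (c : K) : (minusCubic η c).natDegree = 3 := natDegree_cubic _ _ _

variable {η}

lemma IsSeparated.mono {S T : Finset K} (h : IsSeparated η S) (hT : T ⊆ S) :
    IsSeparated η T :=
  fun x hx y hy hxy ↦ h x (hT hx) y (hT hy) hxy

lemma IsSeparated.injOn_shift [NeZero (2 : K)] (hη : η ≠ 0) {T : Finset K}
    (hsep : IsSeparated η T) :
    Set.InjOn (fun x : K × Fin 3 ↦ x.1 + ![0, -η, η] x.2) ↑(T ×ˢ (univ : Finset (Fin 3))) := by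
  rintro ⟨p, i⟩ hp ⟨q, j⟩ hq hpq
  simp only [coe_product, coe_univ, Set.mem_prod, mem_coe, Set.mem_univ, and_true] at hp hq hpq
  have := hsep p hp q hq
  have h2η : (2 : K) * η ≠ 0 := mul_ne_zero two_ne_zero hη
  fin_cases i <;> fin_cases j <;>
    simp only [Fin.zero_eta, Fin.mk_one, Fin.reduceFinMk, Matrix.cons_val, Prod.mk.injEq]
      at hpq ⊢ <;>
    grind

lemma factor_mul_eval_poleCubic {c t : K} (h₀ : t - c ≠ 0) (h₁ : t - c + η ≠ 0) :
    factor η (t - c) * (poleCubic η c).eval t = (plusCubic η c).eval t := by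
  rw [factor, eval_poleCubic, eval_plusCubic]; field_simp

lemma factor_mul_eval_poleCubic_add {c t : K} (h₀ : t - c ≠ 0) (h₁ : t - c + η ≠ 0) :
    factor η (t - c) * (poleCubic η c).eval (t + η) = (minusCubic η c).eval (t + η) := by
  rw [factor, eval_poleCubic, eval_minusCubic]; field_simp; ring

lemma factor_swap_mul_eval_poleCubic {c t : K} (h₀ : t - c ≠ 0) (h₁ : t - c - η ≠ 0) :
    factor η (c - t) * (poleCubic η c).eval t = (minusCubic η c).eval t := by
  rw [factor_sub_swap, eval_poleCubic, eval_minusCubic]; field_simp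

lemma factor_swap_mul_eval_poleCubic_sub {c t : K} (h₀ : t - c ≠ 0) (h₁ : t - c - η ≠ 0) :
    factor η (c - t) * (poleCubic η c).eval (t - η) = (plusCubic η c).eval (t - η) := by
  rw [factor_sub_swap, eval_poleCubic, eval_plusCubic]; field_simp; ring

section Weights

variable [DecidableEq K]

variable (η)

def weight (V I : Finset K) : K := ∏ i ∈ I, ∏ ℓ ∈ V \ I, factor η (i - ℓ)

def weightSum (V : Finset K) (m : ℕ) : K := ∑ I ∈ V.powersetCard m, weight η V I

-- At a new point `t`, the first sum collects the `(k + 1)`-subsets of `insert t T` containing `t`,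
-- the second those avoiding it (`eval_numerator_of_notMem`).
noncomputable def numerator (T : Finset K) (k : ℕ) : K[X] :=
  ∑ I ∈ T.powersetCard k, C (weight η T I) * prodSdiffMulProd (plusCubic η) (poleCubic η) T I +
    ∑ J ∈ T.powersetCard (k + 1),
      C (weight η T J) * prodSdiffMulProd (poleCubic η) (minusCubic η) T J

noncomputable def denominator (T : Finset K) : K[X] := ∏ ℓ ∈ T, poleCubic η ℓ

lemma weightSum_zero (V : Finset K) : weightSum η V 0 = 1 := by
  simp [weightSum, weight]

lemma weightSum_card (V : Finset K) : weightSum η V #V = 1 := by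
  simp [weightSum, weight]

lemma eval_numerator (T : Finset K) (k : ℕ) (t : K) :
    (numerator η T k).eval t =
      ∑ I ∈ T.powersetCard k,
          weight η T I * (prodSdiffMulProd (plusCubic η) (poleCubic η) T I).eval t +
        ∑ J ∈ T.powersetCard (k + 1),
          weight η T J * (prodSdiffMulProd (poleCubic η) (minusCubic η) T J).eval t := by
  simp [numerator, eval_finsetSum]

lemma natDegree_numerator_le (T : Finset K) (k : ℕ) : (numerator η T k).natDegree ≤ 3 * #T := by
  refine (natDegree_add_le _ _).trans (max_le ?_ ?_) <;>
    refine natDegree_sum_le_of_forall_le _ _ fun I hI ↦ (natDegree_C_mul_le _ _).trans ?_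
  · exact (natDegree_prodSdiffMulProd (monic_plusCubic η) (monic_poleCubic η)
      (natDegree_plusCubic η) (natDegree_poleCubic η) (mem_powersetCard.1 hI).1).le
  · exact (natDegree_prodSdiffMulProd (monic_poleCubic η) (monic_minusCubic η)
      (natDegree_poleCubic η) (natDegree_minusCubic η) (mem_powersetCard.1 hI).1).le

lemma coeff_numerator (T : Finset K) (k : ℕ) :
    (numerator η T k).coeff (3 * #T) = weightSum η T k + weightSum η T (k + 1) := by
  rw [numerator, coeff_add, finsetSum_coeff, finsetSum_coeff, weightSum, weightSum]
  congr 1 <;> refine sum_congr rfl fun I hI ↦ ?_ <;> rw [coeff_C_mul]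
  · rw [← natDegree_prodSdiffMulProd (monic_plusCubic η) (monic_poleCubic η)
      (natDegree_plusCubic η) (natDegree_poleCubic η) (mem_powersetCard.1 hI).1,
      (monic_prodSdiffMulProd (monic_plusCubic η) (monic_poleCubic η)).coeff_natDegree, mul_one]
  · rw [← natDegree_prodSdiffMulProd (monic_poleCubic η) (monic_minusCubic η)
      (natDegree_poleCubic η) (natDegree_minusCubic η) (mem_powersetCard.1 hI).1,
      (monic_prodSdiffMulProd (monic_poleCubic η) (monic_minusCubic η)).coeff_natDegree, mul_one]

variable {η}

lemma IsSeparated.sub_ne_zero_of_insert {p : K} {T : Finset K} (h : IsSeparated η (insert p T))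
    (hp : p ∉ T) ⦃ℓ : K⦄ (hℓ : ℓ ∈ T) : p - ℓ ≠ 0 ∧ p - ℓ + η ≠ 0 ∧ p - ℓ - η ≠ 0 :=
  have := h p (mem_insert_self p T) ℓ (mem_insert_of_mem hℓ) (ne_of_mem_of_not_mem hℓ hp).symm
  ⟨this.1, this.2.1, this.2.2.1⟩

lemma weight_insert_of_subset {p : K} {T I : Finset K} (hp : p ∉ T) (hI : I ⊆ T) :
    weight η (insert p T) I = (∏ i ∈ I, factor η (i - p)) * weight η T I := by
  rw [weight, weight, insert_sdiff_of_notMem _ (notMem_mono hI hp), ← prod_mul_distrib]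
  exact prod_congr rfl fun i _ ↦ prod_insert fun h ↦ hp (mem_sdiff.1 h).1

lemma weight_insert_insert {p : K} {T I : Finset K} (hp : p ∉ T) (hI : I ⊆ T) :
    weight η (insert p T) (insert p I) = (∏ ℓ ∈ T \ I, factor η (p - ℓ)) * weight η T I := by
  rw [weight, weight, insert_sdiff_insert, sdiff_insert_of_notMem hp,
    prod_insert (notMem_mono hI hp)]

lemma eval_numerator_of_notMem {a : K} {T : Finset K} (ha : a ∉ T)
    (hsep : IsSeparated η (insert a T)) (k : ℕ) :
    (numerator η T k).eval a = weightSum η (insert a T) (k + 1) * (denominator η T).eval a := by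
  have hs := hsep.sub_ne_zero_of_insert ha
  rw [eval_numerator, weightSum, sum_powersetCard_succ_insert ha, add_mul, sum_mul, sum_mul,
    add_comm]
  congr 1 <;> refine sum_congr rfl fun I hI ↦ ?_ <;> have hIT := (mem_powersetCard.1 hI).1 <;>
    rw [denominator, eval_prod, ← prod_sdiff hIT, prodSdiffMulProd, eval_mul, eval_prod, eval_prod]
  · rw [weight_insert_of_subset ha hIT, ← prod_congr rfl fun i hi ↦
      factor_swap_mul_eval_poleCubic (hs (hIT hi)).1 (hs (hIT hi)).2.2, prod_mul_distrib]
    ring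
  · rw [weight_insert_insert ha hIT, ← prod_congr rfl fun ℓ hℓ ↦
      factor_mul_eval_poleCubic (hs (sdiff_subset hℓ)).1 (hs (sdiff_subset hℓ)).2.1,
      prod_mul_distrib]
    ring

lemma eval_denominator_ne_zero {a : K} {T : Finset K} (ha : a ∉ T)
    (hsep : IsSeparated η (insert a T)) : (denominator η T).eval a ≠ 0 := by
  rw [denominator, eval_prod, prod_ne_zero_iff]
  intro ℓ hℓ
  obtain ⟨h₀, h₁, h₂⟩ := hsep.sub_ne_zero_of_insert ha hℓ
  rw [eval_poleCubic]
  exact mul_ne_zero (mul_ne_zero h₀ h₁) h₂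

lemma weight_mul_eval_prodSdiffMulProd_insert_of_subset {p : K} {T I : Finset K} (hp : p ∉ T)
    (hI : I ⊆ T) (t : K) :
    weight η (insert p T) I *
        (prodSdiffMulProd (plusCubic η) (poleCubic η) (insert p T) I).eval t =
      (plusCubic η p).eval t * weight η T I * (∏ ℓ ∈ T \ I, (plusCubic η ℓ).eval t) *
        ∏ i ∈ I, factor η (i - p) * (poleCubic η i).eval t := by
  rw [weight_insert_of_subset hp hI, prodSdiffMulProd_insert_of_subset hp hI, prodSdiffMulProd,
    eval_mul, eval_mul, eval_prod, eval_prod, prod_mul_distrib]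
  ring

lemma weight_mul_eval_prodSdiffMulProd_insert_insert {p : K} {T I : Finset K} (hp : p ∉ T)
    (hI : I ⊆ T) (t : K) :
    weight η (insert p T) (insert p I) *
        (prodSdiffMulProd (poleCubic η) (minusCubic η) (insert p T) (insert p I)).eval t =
      (minusCubic η p).eval t * weight η T I * (∏ i ∈ I, (minusCubic η i).eval t) *
        ∏ ℓ ∈ T \ I, factor η (p - ℓ) * (poleCubic η ℓ).eval t := by
  rw [weight_insert_insert hp hI, prodSdiffMulProd_insert_insert hp hI, prodSdiffMulProd,
    eval_mul, eval_mul, eval_prod, eval_prod, prod_mul_distrib]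
  ring

lemma eval_numerator_insert_self {p : K} {T : Finset K} (hp : p ∉ T)
    (hsep : IsSeparated η (insert p T)) (k : ℕ) : (numerator η (insert p T) k).eval p = 0 := by
  have hs := hsep.sub_ne_zero_of_insert hp
  have hpole : (poleCubic η p).eval p = 0 := by rw [eval_poleCubic]; ring
  rw [eval_numerator, sum_powersetCard_insert_of_eq_zero_of_mem k fun I hpI ↦ by
      rw [eval_prodSdiffMulProd_of_mem hpI hpole, mul_zero],
    sum_powersetCard_succ_insert_of_eq_zero_of_notMem hp k fun J hpJ ↦ by
      rw [eval_prodSdiffMulProd_of_mem_sdiff (mem_sdiff.2 ⟨mem_insert_self p T, hpJ⟩) hpole,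
        mul_zero],
    ← sum_add_distrib]
  refine sum_eq_zero fun I hI ↦ ?_
  have hIT := (mem_powersetCard.1 hI).1
  rw [weight_mul_eval_prodSdiffMulProd_insert_of_subset hp hIT,
    weight_mul_eval_prodSdiffMulProd_insert_insert hp hIT,
    prod_congr rfl fun i hi ↦ factor_swap_mul_eval_poleCubic (hs (hIT hi)).1 (hs (hIT hi)).2.2,
    prod_congr rfl fun ℓ hℓ ↦
      factor_mul_eval_poleCubic (hs (sdiff_subset hℓ)).1 (hs (sdiff_subset hℓ)).2.1,
    eval_plusCubic η p p, eval_minusCubic η p p]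
  ring

lemma eval_numerator_insert_sub {p : K} {T : Finset K} (hp : p ∉ T)
    (hsep : IsSeparated η (insert p T)) (k : ℕ) :
    (numerator η (insert p T) k).eval (p - η) =
      (plusCubic η p).eval (p - η) * (∏ ℓ ∈ T, (plusCubic η ℓ).eval (p - η)) *
        weightSum η T k := by
  have hs := hsep.sub_ne_zero_of_insert hp
  have hpole : (poleCubic η p).eval (p - η) = 0 := by rw [eval_poleCubic]; ring
  have hminus : (minusCubic η p).eval (p - η) = 0 := by rw [eval_minusCubic]; ring
  rw [eval_numerator, sum_powersetCard_insert_of_eq_zero_of_mem k fun I hpI ↦ by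
      rw [eval_prodSdiffMulProd_of_mem hpI hpole, mul_zero],
    sum_eq_zero (s := (insert p T).powersetCard (k + 1)) fun J _ ↦ ?_, add_zero, weightSum,
    mul_sum]
  · refine sum_congr rfl fun I hI ↦ ?_
    have hIT := (mem_powersetCard.1 hI).1
    rw [weight_mul_eval_prodSdiffMulProd_insert_of_subset hp hIT,
      prod_congr rfl fun i hi ↦
        factor_swap_mul_eval_poleCubic_sub (hs (hIT hi)).1 (hs (hIT hi)).2.2,
      ← prod_sdiff hIT]
    ring
  · by_cases hpJ : p ∈ J
    · rw [eval_prodSdiffMulProd_of_mem hpJ hminus, mul_zero]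
    · rw [eval_prodSdiffMulProd_of_mem_sdiff (mem_sdiff.2 ⟨mem_insert_self p T, hpJ⟩) hpole,
        mul_zero]

lemma eval_numerator_insert_add {p : K} {T : Finset K} (hp : p ∉ T)
    (hsep : IsSeparated η (insert p T)) (k : ℕ) :
    (numerator η (insert p T) k).eval (p + η) =
      (minusCubic η p).eval (p + η) * (∏ ℓ ∈ T, (minusCubic η ℓ).eval (p + η)) *
        weightSum η T k := by
  have hs := hsep.sub_ne_zero_of_insert hp
  have hpole : (poleCubic η p).eval (p + η) = 0 := by rw [eval_poleCubic]; ring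
  have hplus : (plusCubic η p).eval (p + η) = 0 := by rw [eval_plusCubic]; ring
  rw [eval_numerator, sum_powersetCard_succ_insert_of_eq_zero_of_notMem hp k fun J hpJ ↦ by
      rw [eval_prodSdiffMulProd_of_mem_sdiff (mem_sdiff.2 ⟨mem_insert_self p T, hpJ⟩) hpole,
        mul_zero],
    sum_eq_zero (s := (insert p T).powersetCard k) fun I _ ↦ ?_, zero_add, weightSum, mul_sum]
  · refine sum_congr rfl fun I hI ↦ ?_
    have hIT := (mem_powersetCard.1 hI).1
    rw [weight_mul_eval_prodSdiffMulProd_insert_insert hp hIT,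
      prod_congr rfl fun ℓ hℓ ↦
        factor_mul_eval_poleCubic_add (hs (sdiff_subset hℓ)).1 (hs (sdiff_subset hℓ)).2.1,
      ← prod_sdiff hIT]
    ring
  · by_cases hpI : p ∈ I
    · rw [eval_prodSdiffMulProd_of_mem hpI hpole, mul_zero]
    · rw [eval_prodSdiffMulProd_of_mem_sdiff (mem_sdiff.2 ⟨mem_insert_self p T, hpI⟩) hplus,
        mul_zero]

lemma numerator_eq_of_weightSum_eq [NeZero (2 : K)] (hη : η ≠ 0) {T : Finset K}
    (hsep : IsSeparated η T) {k k' : ℕ}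
    (htop : weightSum η T k + weightSum η T (k + 1) = weightSum η T k' + weightSum η T (k' + 1))
    (herase : ∀ p ∈ T, weightSum η (T.erase p) k = weightSum η (T.erase p) k') :
    numerator η T k = numerator η T k' := by
  refine eq_of_degree_sub_lt_of_eval_index_eq _ (hsep.injOn_shift hη) ?_ ?_
  · rw [card_product, card_univ, Fintype.card_fin, mul_comm]
    exact degree_sub_lt_of_coeff_eq (natDegree_numerator_le η T k) (natDegree_numerator_le η T k')
      (by rw [coeff_numerator, coeff_numerator, htop])
  · rintro ⟨p, j⟩ hpj
    obtain ⟨hp, -⟩ := mem_product.1 hpj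
    have hp' := notMem_erase p T
    have hsep' : IsSeparated η (insert p (T.erase p)) := by rwa [insert_erase hp]
    rw [← insert_erase hp]
    fin_cases j <;>
      simp only [Fin.zero_eta, Fin.mk_one, Fin.reduceFinMk, Matrix.cons_val, add_zero,
        ← sub_eq_add_neg]
    · rw [eval_numerator_insert_self hp' hsep', eval_numerator_insert_self hp' hsep']
    · rw [eval_numerator_insert_sub hp' hsep', eval_numerator_insert_sub hp' hsep', herase p hp]
    · rw [eval_numerator_insert_add hp' hsep', eval_numerator_insert_add hp' hsep', herase p hp]

lemma weightSum_insert_succ_eq [NeZero (2 : K)] (hη : η ≠ 0) {a : K} {T : Finset K}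
    (ha : a ∉ T) (hsep : IsSeparated η (insert a T)) {k k' : ℕ}
    (htop : weightSum η T k + weightSum η T (k + 1) = weightSum η T k' + weightSum η T (k' + 1))
    (herase : ∀ p ∈ T, weightSum η (T.erase p) k = weightSum η (T.erase p) k') :
    weightSum η (insert a T) (k + 1) = weightSum η (insert a T) (k' + 1) := by
  refine mul_right_cancel₀ (eval_denominator_ne_zero ha hsep) ?_
  rw [← eval_numerator_of_notMem ha hsep, ← eval_numerator_of_notMem ha hsep,
    numerator_eq_of_weightSum_eq hη (hsep.mono (subset_insert a T)) htop herase]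

theorem weightSum_eq_weightSum_card_sub [NeZero (2 : K)] (hη : η ≠ 0)
    {V : Finset K} (hV : IsSeparated η V) {m : ℕ} (hm : m ≤ #V) :
    weightSum η V m = weightSum η V (#V - m) := by
  induction V using Finset.strongInduction generalizing m with
  | H V ih =>
  rcases Nat.eq_zero_or_pos m with rfl | hm₀
  · rw [Nat.sub_zero, weightSum_zero, weightSum_card]
  rcases hm.eq_or_lt with rfl | hmV
  · rw [Nat.sub_self, weightSum_zero, weightSum_card]
  obtain ⟨a, ha⟩ := card_pos.1 (hm₀.trans hmV)
  obtain ⟨k, rfl⟩ : ∃ k, m = k + 1 := ⟨m - 1, by omega⟩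
  have hT : #(V.erase a) = #V - 1 := card_erase_of_mem ha
  obtain ⟨k', hk'⟩ : ∃ k', #V - (k + 1) = k' + 1 := ⟨#V - k - 2, by omega⟩
  have ihT {t : Finset K} (ht : t ⊆ V.erase a) {j : ℕ} (hj : j ≤ #t) :
      weightSum η t j = weightSum η t (#t - j) :=
    ih t (ht.trans_ssubset (erase_ssubset ha)) (hV.mono (ht.trans (erase_subset a V))) hj
  have htop : weightSum η (V.erase a) k + weightSum η (V.erase a) (k + 1) =
      weightSum η (V.erase a) k' + weightSum η (V.erase a) (k' + 1) := by
    rw [ihT subset_rfl (by omega : k ≤ _), ihT subset_rfl (by omega : k + 1 ≤ _),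
      show #(V.erase a) - k = k' + 1 by omega, show #(V.erase a) - (k + 1) = k' by omega,
      add_comm]
  have herase (p : K) (hp : p ∈ V.erase a) :
      weightSum η ((V.erase a).erase p) k = weightSum η ((V.erase a).erase p) k' := by
    have := card_erase_of_mem hp
    rw [ihT (erase_subset p _) (by omega : k ≤ _), show #((V.erase a).erase p) - k = k' by omega]
  rw [hk', ← insert_erase ha]
  exact weightSum_insert_succ_eq hη (notMem_erase a V) (by rwa [insert_erase ha]) htop herase

end Weights

end DeformedRS

/-- Rational degeneration of Lemma 4.1 of the paper: for every subset size m,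
the sums over m-element subsets of the U⁺- and U⁻-products coincide. -/
theorem deformedRS_key_identity (S : Finset ℝ) (η : ℝ) (hη : η ≠ 0)
    (hdist : ∀ x ∈ S, ∀ y ∈ S, x ≠ y →
      x - y ≠ 0 ∧ x - y + η ≠ 0 ∧ x - y - η ≠ 0 ∧ x - y + 2*η ≠ 0 ∧ x - y - 2*η ≠ 0)
    (m : ℕ) :
    ∑ I ∈ S.powersetCard m, ∏ i ∈ I, ∏ ℓ ∈ S \ I,
        ((i - ℓ + 2*η) * (i - ℓ - η)) / ((i - ℓ + η) * (i - ℓ))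
      = ∑ I ∈ S.powersetCard m, ∏ i ∈ I, ∏ ℓ ∈ S \ I,
        ((i - ℓ - 2*η) * (i - ℓ + η)) / ((i - ℓ - η) * (i - ℓ)) := by
  rcases le_or_gt m #S with hm | hm
  · simp only [← DeformedRS.factor_sub_swap]
    rw [sum_powersetCard_prod_prod_sdiff_swap hm fun j i ↦ DeformedRS.factor η (j - i)]
    exact DeformedRS.weightSum_eq_weightSum_card_sub hη hdist hm
  · simp [powersetCard_eq_empty.2 hm]
end

section
/- Let x₁,…,xₙ and y₁,…,yₙ and λ be complex numbers such that yᵢ - xⱼ ≠ 0 for all i,j and λ ≠ 0 and λ + ∑ₖ(yₖ - xₖ) arbitrary. Define the n×n matrix M with entries M_{ij} = (yᵢ - xⱼ + λ)/(λ (yᵢ - xⱼ)). Then det M = (λ + ∑_{k=1}^n (yₖ - xₖ))/λ · (∏_{k<l} (yₖ - yₗ)(xₗ - xₖ)) / (∏_{k,l} (yₖ - xₗ)). -/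
/-!
With `s = λ⁻¹` the matrix is `C + s J`, where `C = ((yᵢ - xⱼ)⁻¹)` is the Cauchy matrix and `J` the
all-ones matrix, and the claim reads `det (C + s J) = (1 + s ∑ₖ (yₖ - xₖ)) · det C` combined with
Cauchy's formula for `det C`. Both are proved at once, for all `s`, by induction on `n`. Clearing the
first row and column against the pivot `(y₀ - x₀)⁻¹ + s` leaves, after scaling rows and columns,
a bordered matrix whose determinant is `(y₀ - x₀)⁻¹ det C' + s det (C' + (y₀ - x₀)⁻¹ J)` for the
smaller Cauchy matrix `C'`; so the induction hypothesis is used at `s = 0` and at `s = (y₀ - x₀)⁻¹`.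
-/

open Finset

namespace Matrix

variable {R : Type*} [CommRing R]

theorem det_eq_of_forall_eq_sub_pivot_row_col {ι : Type*} [Fintype ι] [DecidableEq ι]
    {A B : Matrix ι ι R} (k : ι) (ρ c : ι → R) (hρ : ρ k = 0) (hc : c k = 0)
    (hB : ∀ i j, B i j = A i j - c j * A i k - ρ i * (A k j - c j * A k k)) :
    det B = det A := by
  set A' : Matrix ι ι R := of fun i j => A i j - c j * A i k
  have hcol : det A' = det A := by
    rw [← det_transpose A', ← det_transpose A]
    exact det_eq_of_forall_row_eq_smul_add_const (-c) k (by simp [hc])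
      fun j i => by simp [A', sub_eq_add_neg]
  rw [← hcol]
  exact det_eq_of_forall_row_eq_smul_add_const (-ρ) k (by simp [hρ])
    fun i j => by simp [A', hB, sub_eq_add_neg]

theorem det_succ_of_col_zero_eq_zero {n : ℕ} (M : Matrix (Fin (n + 1)) (Fin (n + 1)) R)
    (hM : ∀ i : Fin n, M i.succ 0 = 0) : det M = M 0 0 * det (M.submatrix Fin.succ Fin.succ) := by
  rw [det_succ_column_zero, Fin.sum_univ_succ, sum_eq_zero fun i _ => by simp [hM]]
  simp

theorem det_border_const {n : ℕ} (B : Matrix (Fin n) (Fin n) R) (a s : R) :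
    det (of (Fin.cons (Fin.cons (a + s) fun _ => a) fun i => Fin.cons (-s) (B i)) :
        Matrix (Fin (n + 1)) (Fin (n + 1)) R)
      = a * det B + s * det (of fun i j => B i j + a) := by
  set K : Matrix (Fin (n + 1)) (Fin (n + 1)) R :=
    of (Fin.cons (Fin.cons (a + s) fun _ => a) fun i => Fin.cons (-s) (B i))
  -- The first column is `a • e₀ + s • (1, -1, …, -1)`; adding row `0` to the other rows turns
  -- the second summand into the first column of a matrix with lower block `B + a J`.
  have hcol : (fun i => K i 0) = Pi.single 0 a + s • Fin.cons 1 fun _ => -1 := by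
    ext i; cases i using Fin.cases <;> simp [K]
  have hsingle : det (K.updateCol 0 (Pi.single 0 a)) = a * det B := by
    rw [det_succ_of_col_zero_eq_zero _ fun i => by simp]
    rfl
  have hones : det (K.updateCol 0 (Fin.cons 1 fun _ => -1)) = det (of fun i j => B i j + a) := by
    have hrow : det (K.updateCol 0 (Fin.cons 1 fun _ => -1))
        = det (of (Fin.cons (Fin.cons 1 fun _ => a) fun i => Fin.cons 0 fun j => B i j + a) :
            Matrix (Fin (n + 1)) (Fin (n + 1)) R) := by
      refine det_eq_of_forall_row_eq_smul_add_const (Fin.cons 0 fun _ => -1) 0 rfl fun i j => ?_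
      cases i using Fin.cases <;> cases j using Fin.cases <;> simp [K]
    rw [hrow, det_succ_of_col_zero_eq_zero _ fun i => by simp]
    simp only [of_apply, Fin.cons_zero, one_mul]
    rfl
  rw [← K.updateCol_eq_self 0, hcol, det_updateCol_add, det_updateCol_smul, hsingle, hones]

end Matrix

open Matrix

section Cauchy

variable {K : Type*} [Field K]

def cauchyDetFormula {n : ℕ} (x y : Fin n → K) : K :=
  (∏ k, ∏ l ∈ Ioi k, (y k - y l) * (x l - x k)) / ∏ k, ∏ l, (y k - x l)

theorem cauchyDetFormula_succ {n : ℕ} (x y : Fin (n + 1) → K) :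
    cauchyDetFormula x y = (y 0 - x 0)⁻¹ * (∏ i : Fin n, (y 0 - y i.succ) / (y i.succ - x 0))
      * (∏ j : Fin n, (x j.succ - x 0) / (y 0 - x j.succ))
      * cauchyDetFormula (fun i => x i.succ) (fun i => y i.succ) := by
  simp only [cauchyDetFormula, Fin.prod_univ_succ, Fin.prod_Ioi_zero, Fin.prod_Ioi_succ,
    div_eq_mul_inv, mul_inv, prod_mul_distrib, prod_inv_distrib]
  ring

theorem det_inv_sub_add_const_eq_border {n : ℕ} (x y : Fin (n + 1) → K)
    (h : ∀ i j, y i - x j ≠ 0) (s : K) :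
    det (of fun i j => (y i - x j)⁻¹ + s)
      = (∏ i : Fin n, (y 0 - y i.succ) / (y i.succ - x 0))
        * ((∏ j : Fin n, (x j.succ - x 0) / (y 0 - x j.succ))
          * det (of (Fin.cons (Fin.cons ((y 0 - x 0)⁻¹ + s) fun _ => (y 0 - x 0)⁻¹)
              fun i => Fin.cons (-s)
                ((of fun i j => (y i.succ - x j.succ)⁻¹ : Matrix (Fin n) (Fin n) K) i)) :
            Matrix (Fin (n + 1)) (Fin (n + 1)) K)) := by
  set r : Fin (n + 1) → K := Fin.cons 1 fun i => (y 0 - y i.succ) / (y i.succ - x 0)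
  set c : Fin (n + 1) → K := Fin.cons 1 fun j => (x j.succ - x 0) / (y 0 - x j.succ)
  set B : Matrix (Fin (n + 1)) (Fin (n + 1)) K :=
    of (Fin.cons (Fin.cons ((y 0 - x 0)⁻¹ + s) fun _ => (y 0 - x 0)⁻¹)
      fun i => Fin.cons (-s) ((of fun i j => (y i.succ - x j.succ)⁻¹ : Matrix (Fin n) (Fin n) K) i))
  -- Clear the first row and column against the pivot entry, then scale rows by `r` and columns by `c`.
  calc _ = det (of fun i j => r i * (of fun i j => c j * B i j) i j) := by
        refine (det_eq_of_forall_eq_sub_pivot_row_col 0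
          (Fin.cons 0 fun i => (y 0 - x 0) / (y i.succ - x 0)) (Fin.cons 0 fun _ => 1) rfl rfl
          fun i j => ?_).symm
        cases i using Fin.cases with
        | zero => cases j using Fin.cases with
          | zero => simp [r, c, B]
          | succ j =>
            simp only [r, c, B, of_apply, Fin.cons_zero, Fin.cons_succ]
            field_simp [h 0 0, h 0 j.succ]
            ring
        | succ i => cases j using Fin.cases with
          | zero =>
            simp only [r, c, B, of_apply, Fin.cons_zero, Fin.cons_succ]
            field_simp [h 0 0, h i.succ 0]
            ring
          | succ j =>
            simp only [r, c, B, of_apply, Fin.cons_succ]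
            field_simp [h 0 0, h i.succ 0, h 0 j.succ, h i.succ j.succ]
            ring
    _ = _ := by rw [det_mul_column, det_mul_row, Fin.prod_cons, Fin.prod_cons, one_mul, one_mul]

theorem det_inv_sub_add_const {n : ℕ} (x y : Fin n → K) (h : ∀ i j, y i - x j ≠ 0) (s : K) :
    det (of fun i j => (y i - x j)⁻¹ + s) = (1 + s * ∑ k, (y k - x k)) * cauchyDetFormula x y := by
  induction n generalizing s with
  | zero => simp [cauchyDetFormula]
  | succ n ih =>
    have ih' := ih (fun i => x i.succ) (fun i => y i.succ) fun i j => h _ _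
    have ih₀ := ih' 0
    simp only [add_zero, zero_mul, one_mul] at ih₀
    rw [det_inv_sub_add_const_eq_border x y h, det_border_const, ih₀]
    simp only [of_apply]
    rw [ih', cauchyDetFormula_succ, Fin.sum_univ_succ]
    generalize (∏ i : Fin n, (y 0 - y i.succ) / (y i.succ - x 0)) = P
    generalize (∏ j : Fin n, (x j.succ - x 0) / (y 0 - x j.succ)) = P'
    field_simp [h 0 0]

end Cauchy

/-- Rational degeneration of the elliptic Cauchy determinant formula. -/
theorem rational_cauchy_det (n : ℕ) (x y : Fin n → ℂ) (lam : ℂ) (hlam : lam ≠ 0)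
    (h : ∀ i j, y i - x j ≠ 0) :
    Matrix.det (Matrix.of fun i j => (y i - x j + lam) / (lam * (y i - x j)))
      = (lam + ∑ k, (y k - x k)) / lam
        * (∏ k, ∏ l ∈ Finset.Ioi k, (y k - y l) * (x l - x k))
        / (∏ k, ∏ l, (y k - x l)) := by
  have hentry : (of fun i j => (y i - x j + lam) / (lam * (y i - x j)))
      = of fun i j => (y i - x j)⁻¹ + lam⁻¹ := by
    ext i j
    simp only [of_apply]
    field_simp [h i j]
    ring
  rw [hentry, det_inv_sub_add_const x y h, cauchyDetFormula]
  field_simp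
end

section
/- Let S be a finite set, η ≠ 0 real, and X : S → ℝ injective with X(i) - X(j) ∉ {±η, ±2η} for distinct i,j. Define U⁺(i,j) = ((X(i)-X(j)+2η)(X(i)-X(j)-η))/((X(i)-X(j)+η)(X(i)-X(j))) and U⁻(i,j) = ((X(i)-X(j)-2η)(X(i)-X(j)+η))/((X(i)-X(j)-η)(X(i)-X(j))). Then ∑_{I ⊆ S} ∏_{i∈I} ∏_{ℓ∈S∖I} U⁺(i,ℓ) = ∑_{I ⊆ S} ∏_{i∈I} ∏_{ℓ∈S∖I} U⁻(i,ℓ), where the sums run over all subsets I of S (including the empty set and S itself, each contributing 1). -/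
open Finset

/-- Rational degeneration of the full identity (4.8) of Lemma 4.1: summed over
all subsets, the U⁺- and U⁻-sums coincide. -/
theorem deformedRS_full_identity (ι : Type*) [Fintype ι] [DecidableEq ι]
    (η : ℝ) (hη : η ≠ 0) (X : ι → ℝ) (hinj : Function.Injective X)
    (hsep : ∀ i j : ι, i ≠ j →
      X i - X j ≠ η ∧ X i - X j ≠ -η ∧ X i - X j ≠ 2*η ∧ X i - X j ≠ -(2*η)) :
    ∑ I : Finset ι, ∏ i ∈ I, ∏ ℓ ∈ Iᶜ,
        ((X i - X ℓ + 2*η) * (X i - X ℓ - η)) / ((X i - X ℓ + η) * (X i - X ℓ))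
      = ∑ I : Finset ι, ∏ i ∈ I, ∏ ℓ ∈ Iᶜ,
        ((X i - X ℓ - 2*η) * (X i - X ℓ + η)) / ((X i - X ℓ - η) * (X i - X ℓ)) := by
  apply Fintype.sum_equiv (Function.Involutive.toPerm _ (compl_involutive (α := Finset ι)))
  intro I
  simp only [Function.Involutive.coe_toPerm, compl_compl]
  rw [Finset.prod_comm]
  refine Finset.prod_congr rfl fun i _ => Finset.prod_congr rfl fun ℓ _ => ?_
  rw [show (X ℓ - X i + 2*η) * (X ℓ - X i - η) = (X i - X ℓ - 2*η) * (X i - X ℓ + η) by ring,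
      show (X ℓ - X i + η) * (X ℓ - X i) = (X i - X ℓ - η) * (X i - X ℓ) by ring]
end
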